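/- Let C > 0 and γ ∈ (0,1) with γ ≤ e^{−C}. Then for every integer i ≥ 1, e^{−(i−1)γ}(1 − e^{−γ}) ≥ (1 − e^{−C}) · γ(1−γ)^{i−1}. Equivalently, if X ~ Exp_{≤C}(1) and Y is geometric(γ), then P(X ∈ ((i−1)γ, iγ]) ≥ P(Y = i) whenever iγ ≤ C. -/
import Mathlib


/-- For `C > 0` and `γ ∈ (0,1)` with `γ ≤ e^{-C}`, for every integer `i ≥ 1`:
`e^{-(i-1)γ}(1 - e^{-γ}) ≥ (1 - e^{-C}) · γ(1-γ)^{i-1}`, i.e. if `X ~ Exp_{≤C}(1)` and `Y`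
is geometric(γ), then `P(X ∈ ((i-1)γ, iγ]) ≥ P(Y = i)`. -/
theorem stmt_7 (C γ : ℝ) (hC : 0 < C) (hγ : γ ∈ Set.Ioo (0 : ℝ) 1)
    (hγC : γ ≤ Real.exp (-C)) (i : ℕ) (hi : 1 ≤ i) :
    (1 - Real.exp (-C)) * (γ * (1 - γ) ^ (i - 1)) ≤
      Real.exp (-((i : ℝ) - 1) * γ) * (1 - Real.exp (-γ)) := by
  obtain ⟨hγ0, hγ1⟩ := hγ
  have h1γ : (0:ℝ) ≤ 1 - γ := by linarith
  have hbase : 1 - γ ≤ Real.exp (-γ) := by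
    have := Real.add_one_le_exp (-γ); linarith
  have hpow : (1 - γ) ^ (i - 1) ≤ Real.exp (-((i : ℝ) - 1) * γ) := by
    calc (1 - γ) ^ (i - 1) ≤ (Real.exp (-γ)) ^ (i - 1) :=
          pow_le_pow_left₀ h1γ hbase _
      _ = Real.exp (((i - 1 : ℕ) : ℝ) * (-γ)) := by rw [← Real.exp_nat_mul]
      _ = Real.exp (-((i : ℝ) - 1) * γ) := by
          congr 1
          have h : ((i - 1 : ℕ) : ℝ) = (i : ℝ) - 1 := by
            push_cast [Nat.cast_sub hi]; ring
          rw [h]; ring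
  -- e^{-γ} ≤ 1 - γ + γ²
  have hquad : Real.exp (-γ) ≤ 1 - γ + γ ^ 2 := by
    have h1 : 1 + γ ≤ Real.exp γ := by linarith [Real.add_one_le_exp γ]
    have hpos : (0:ℝ) < 1 + γ := by linarith
    have h2 : Real.exp (-γ) ≤ 1 / (1 + γ) := by
      rw [Real.exp_neg, le_div_iff₀ hpos, inv_mul_eq_div, div_le_one (Real.exp_pos γ)]
      exact h1
    have h3 : 1 / (1 + γ) ≤ 1 - γ + γ ^ 2 := by
      rw [div_le_iff₀ hpos]; nlinarith
    linarith
  have h2 : (1 - Real.exp (-C)) * γ ≤ 1 - Real.exp (-γ) := by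
    have hγC' : 1 - Real.exp (-C) ≤ 1 - γ := by linarith
    nlinarith
  have hnn1 : 0 ≤ (1 - Real.exp (-C)) * γ := by
    have : Real.exp (-C) ≤ 1 := Real.exp_le_one_iff.mpr (by linarith)
    nlinarith
  have hnn2 : 0 ≤ (1 - γ) ^ (i - 1) := pow_nonneg h1γ _
  calc (1 - Real.exp (-C)) * (γ * (1 - γ) ^ (i - 1))
      = ((1 - Real.exp (-C)) * γ) * (1 - γ) ^ (i - 1) := by ring
    _ ≤ (1 - Real.exp (-γ)) * Real.exp (-((i : ℝ) - 1) * γ) :=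
        mul_le_mul h2 hpow hnn2 (by nlinarith [Real.exp_pos (-γ)])
    _ = Real.exp (-((i : ℝ) - 1) * γ) * (1 - Real.exp (-γ)) := by ring
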